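/- arXiv:1210.4822 — 2 statements merged into one kernel-verified Lean document; each statement's English description precedes it below -/
import Mathlib

section
/- For every natural number n ≥ 9, (1 - 2·√(log n / n))^(2·√(n·log n)) ≤ n^(-4), where the exponentiation is real exponentiation (rpow). (This is the paper's bound showing that two candidates, each sampling 2⌈√(n log n)⌉ referees, fail to share a common referee with probability at most n^(-4).) -/
/-!
Since `1 - x ≤ exp (-x)`, the left-hand side is at most `exp (-x y)` with
`x = 2√(log n / n)` and `y = 2√(n log n)`, and `x y = 4 log n`. Monotonicity of `t ↦ t ^ y`
requires `1 - x ≥ 0`, i.e. `log n / n ≤ 1 / 4`, which holds for `n ≥ 9` because `log t / t`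
decreases beyond `e` and `log 9 = 2 log 3 < 9 / 4`.
-/

open Real

lemma Real.log_div_self_le_one_fourth {x : ℝ} (hx : 9 ≤ x) : log x / x ≤ 1 / 4 := by
  have he : exp 1 ≤ 9 := by linarith [exp_one_lt_d9]
  have hlog9 : log 9 ≤ 9 / 4 := by
    have h9 : log 9 = 2 * log 3 := by
      rw [show (9 : ℝ) = 3 ^ 2 by norm_num, log_pow, Nat.cast_ofNat]
    linarith [log_three_lt_d9]
  calc log x / x ≤ log 9 / 9 := log_div_self_antitoneOn he (he.trans hx) hx
    _ ≤ 1 / 4 := by linarith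

lemma Real.one_sub_rpow_le_exp_neg_mul {x y : ℝ} (hx : x ≤ 1) (hy : 0 ≤ y) :
    (1 - x) ^ y ≤ exp (-(x * y)) := by
  calc (1 - x) ^ y ≤ exp (-x) ^ y := rpow_le_rpow (by linarith) (one_sub_le_exp_neg x) hy
    _ = exp (-(x * y)) := by rw [← exp_mul, neg_mul]

lemma Real.sqrt_div_mul_sqrt_mul {a b : ℝ} (ha : 0 ≤ a) (hb : 0 < b) :
    √(a / b) * √(b * a) = a := by
  have hsq : a / b * (b * a) = a ^ 2 := by field_simp
  rw [← sqrt_mul (div_nonneg ha hb.le), hsq, sqrt_sq ha]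

/-- Two candidates, each sampling `2⌈√(n log n)⌉` referees out of `n` nodes, fail to
share a common referee with probability at most
`(1 - 2√(log n / n))^(2√(n log n)) ≤ n⁻⁴` (real exponentiation). -/
theorem no_common_referee_prob_le (n : ℕ) (hn : 9 ≤ n) :
    (1 - 2 * Real.sqrt (Real.log n / n)) ^ (2 * Real.sqrt (n * Real.log n)) ≤
      (n : ℝ) ^ (-4 : ℝ) := by
  have hn9 : (9 : ℝ) ≤ n := by exact_mod_cast hn
  have hlog : 0 ≤ log n := log_nonneg (by linarith)
  have hx : 2 * √(log n / n) ≤ 1 := by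
    have : √(log n / n) ≤ 1 / 2 :=
      sqrt_le_iff.mpr ⟨by norm_num, by linarith [log_div_self_le_one_fourth hn9]⟩
    linarith
  have hxy : 2 * √(log n / n) * (2 * √(n * log n)) = 4 * log n := by
    rw [mul_mul_mul_comm, sqrt_div_mul_sqrt_mul hlog (by linarith)]
    norm_num
  calc _ ≤ exp (-(2 * √(log n / n) * (2 * √(n * log n)))) :=
        one_sub_rpow_le_exp_neg_mul hx (by positivity)
    _ = (n : ℝ) ^ (-4 : ℝ) := by
        rw [hxy, rpow_def_of_pos (by linarith)]
        ring_nf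
end

section
/- Let n ≥ 1 be a natural number and let X be distributed according to the binomial distribution with n trials and success probability p = 2·log n / n (which lies in [0,1] since 2·log n ≤ n). Then the probability that X > 7·log n is at most n^(-2). (This is the paper's Chernoff-bound claim that with probability at least 1 - n^(-2) there are at most 7 log n candidate nodes when each of n nodes independently becomes a candidate with probability 2 log n / n.) -/
open scoped ENNReal NNReal

set_option linter.deprecated false

/-! Chernoff's method with exponent `t = 1`: by Markov's inequality applied to `e^X`,
`P(X > a) ≤ e^{-a} 𝔼[e^X] = e^{-a} (1 + p(e - 1))^n ≤ exp(-a + np(e - 1))`.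
With `np = 2 log n` and `a = 7 log n` the exponent is `(2e - 9) log n ≤ -2 log n`. -/

namespace PMF

theorem binomial_sum_mul_pow (p : ℝ≥0) (hp : p ≤ 1) (n : ℕ) (x : ℝ≥0∞) :
    ∑ i : Fin (n + 1), binomial p hp n i * x ^ (i : ℕ) = ((p : ℝ≥0∞) * x + (1 - p)) ^ n := by
  rw [add_pow, Finset.sum_fin_eq_sum_range]
  refine Finset.sum_congr rfl fun i hi => ?_
  rw [dif_pos (Finset.mem_range.mp hi), binomial_apply]
  simp only [Fin.val_last]
  ring

theorem binomial_mgf_base_le (p : ℝ≥0) (hp : p ≤ 1) (x : ℝ) (hx : 0 ≤ x) :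
    (p : ℝ≥0∞) * ENNReal.ofReal x + (1 - p) ≤ ENNReal.ofReal (Real.exp (p * (x - 1))) := by
  have hp' : (p : ℝ) ≤ 1 := hp
  rw [← ENNReal.ofReal_coe_nnreal, ← ENNReal.ofReal_mul p.coe_nonneg, ← ENNReal.ofReal_one,
    ← ENNReal.ofReal_sub _ p.coe_nonneg, ← ENNReal.ofReal_add (by positivity) (by linarith)]
  apply ENNReal.ofReal_le_ofReal
  calc (p : ℝ) * x + (1 - p) = p * (x - 1) + 1 := by ring
    _ ≤ Real.exp (p * (x - 1)) := Real.add_one_le_exp _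

theorem binomial_toMeasure_gt_le (p : ℝ≥0) (hp : p ≤ 1) (n : ℕ) (a t : ℝ) (ht : 0 ≤ t) :
    (binomial p hp n).toMeasure {k | a < (k : ℝ)} ≤
      ENNReal.ofReal (Real.exp (-(t * a) + n * p * (Real.exp t - 1))) := by
  set P := binomial p hp n
  have markov (x : Fin (n + 1)) : {k : Fin (n + 1) | a < (k : ℝ)}.indicator P x ≤
      ENNReal.ofReal (Real.exp (-(t * a))) * (P x * ENNReal.ofReal (Real.exp t) ^ (x : ℕ)) := by
    rw [← ENNReal.ofReal_pow (Real.exp_pos t).le, ← Real.exp_nat_mul, mul_left_comm,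
      ← ENNReal.ofReal_mul (Real.exp_pos _).le, ← Real.exp_add]
    by_cases hx : a < (x : ℝ)
    · rw [Set.indicator_of_mem (s := {k : Fin (n + 1) | a < (k : ℝ)}) hx]
      refine le_mul_of_one_le_right zero_le (ENNReal.one_le_ofReal.mpr (Real.one_le_exp ?_))
      nlinarith
    · rw [Set.indicator_of_notMem (s := {k : Fin (n + 1) | a < (k : ℝ)}) hx]
      exact zero_le
  have mgf : ((p : ℝ≥0∞) * ENNReal.ofReal (Real.exp t) + (1 - p)) ^ n ≤
      ENNReal.ofReal (Real.exp (n * p * (Real.exp t - 1))) := by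
    rw [mul_assoc, Real.exp_nat_mul, ENNReal.ofReal_pow (Real.exp_pos _).le]
    exact pow_le_pow_left' (binomial_mgf_base_le p hp _ (Real.exp_pos t).le) n
  rw [toMeasure_apply_fintype]
  calc ∑ x, {k : Fin (n + 1) | a < (k : ℝ)}.indicator P x
      ≤ ENNReal.ofReal (Real.exp (-(t * a))) *
          ∑ x : Fin (n + 1), P x * ENNReal.ofReal (Real.exp t) ^ (x : ℕ) := by
        rw [Finset.mul_sum]
        exact Finset.sum_le_sum fun x _ => markov x
    _ ≤ ENNReal.ofReal (Real.exp (-(t * a))) *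
          ENNReal.ofReal (Real.exp (n * p * (Real.exp t - 1))) := by
        rw [binomial_sum_mul_pow]
        gcongr
    _ = ENNReal.ofReal (Real.exp (-(t * a) + n * p * (Real.exp t - 1))) := by
        rw [← ENNReal.ofReal_mul (Real.exp_pos _).le, ← Real.exp_add]

end PMF

/-- Chernoff-bound claim: if `X` is binomial with `n` trials and success probability
`p = 2 log n / n`, then `P(X > 7 log n) ≤ n⁻²`. -/
theorem binomial_candidates_tail_le (n : ℕ) (hn : 1 ≤ n)
    (hp : ENNReal.ofReal (2 * Real.log n / n) ≤ 1) :
    (PMF.binomial (Real.toNNReal (2 * Real.log n / n)) (ENNReal.coe_le_one_iff.mp hp) n).toMeasure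
        {k : Fin (n + 1) | (k : ℝ) > 7 * Real.log n} ≤
      ENNReal.ofReal (((n : ℝ) ^ 2)⁻¹) := by
  have hn0 : (0 : ℝ) < n := by exact_mod_cast hn
  have hlog : 0 ≤ Real.log n := Real.log_natCast_nonneg n
  have hmean : (n : ℝ) * Real.toNNReal (2 * Real.log n / n) = 2 * Real.log n := by
    rw [Real.coe_toNNReal _ (by positivity)]
    field_simp
  refine (PMF.binomial_toMeasure_gt_le _ _ n _ 1 zero_le_one).trans
    (ENNReal.ofReal_le_ofReal ?_)
  calc Real.exp (-(1 * (7 * Real.log n)) + n * Real.toNNReal (2 * Real.log n / n) *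
        (Real.exp 1 - 1))
      ≤ Real.exp (-(2 * Real.log n)) := by
        rw [Real.exp_le_exp, hmean]
        nlinarith [Real.exp_one_lt_d9]
    _ = ((n : ℝ) ^ 2)⁻¹ := by
        rw [Real.exp_neg, two_mul, Real.exp_add, Real.exp_log hn0, sq]
end
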